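/- Let n ≥ 1, γ, Λ ∈ ℝ, and suppose differentiable functions α₁, a, C, φ : I → ℝ on an interval I satisfy α₁' + α₁² + a = 0, a' + ((2 + n(γ-1))α₁ + Λφ)a = 0, C' + (n(γ-1)α₁ + Λφ)C = 0. Then with v(t,x) = α₁(t)x and T(t,x) = a(t)|x|² + C(t), the temperature equation ∂ₜT + (v·∇ₓT) + (γ-1)T·n·α₁(t) = -Λφ(t)T holds for all (t,x) ∈ I × ℝⁿ. -/
import Mathlib


theorem temperature_equation (n : ℕ) (hn : 1 ≤ n) (γ Λ : ℝ) (I : Set ℝ)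
    (α₁ a C φ : ℝ → ℝ)
    (hα : ∀ t ∈ I, HasDerivAt α₁ (-(α₁ t) ^ 2 - a t) t)
    (ha : ∀ t ∈ I, HasDerivAt a (-((2 + (n : ℝ) * (γ - 1)) * α₁ t + Λ * φ t) * a t) t)
    (hC : ∀ t ∈ I, HasDerivAt C (-((n : ℝ) * (γ - 1) * α₁ t + Λ * φ t) * C t) t)
    (T : ℝ → EuclideanSpace ℝ (Fin n) → ℝ)
    (hT : ∀ t x, T t x = a t * ‖x‖ ^ 2 + C t) :
    -- ∂ₜT + v·∇ₓT + (γ-1) T n α₁ = -Λ φ T, where v(t,x) = α₁(t) x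
    ∀ t ∈ I, ∀ x : EuclideanSpace ℝ (Fin n),
      HasDerivAt (fun τ => T τ x)
        (-(fderiv ℝ (T t) x (α₁ t • x)) - (γ - 1) * T t x * (n : ℝ) * α₁ t
          - Λ * φ t * T t x) t := by
  intro t ht x
  -- spatial derivative
  have hsp : HasFDerivAt (T t) ((a t) • (2 • (innerSL ℝ x))) x := by
    have h1 : HasFDerivAt (fun y : EuclideanSpace ℝ (Fin n) => ‖y‖ ^ 2)
        (2 • (innerSL ℝ x)) x := (hasStrictFDerivAt_norm_sq x).hasFDerivAt
    have h2 := (h1.const_smul (a t)).add_const (C t)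
    have hTf : T t = fun y : EuclideanSpace ℝ (Fin n) => a t • ‖y‖ ^ 2 + C t :=
      funext fun y => by rw [hT t y]; simp [smul_eq_mul]
    rw [hTf]; exact h2
  have hfd : fderiv ℝ (T t) x (α₁ t • x) = a t * (2 * (α₁ t * ‖x‖ ^ 2)) := by
    rw [hsp.fderiv]
    simp only [ContinuousLinearMap.smul_apply, innerSL_apply_apply, smul_eq_mul,
      real_inner_smul_right, real_inner_self_eq_norm_sq]
    ring
  -- time derivative
  have htd : HasDerivAt (fun τ => a τ * ‖x‖ ^ 2 + C τ)
      (-((2 + (n : ℝ) * (γ - 1)) * α₁ t + Λ * φ t) * a t * ‖x‖ ^ 2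
        + -((n : ℝ) * (γ - 1) * α₁ t + Λ * φ t) * C t) t :=
    ((ha t ht).mul_const _).add (hC t ht)
  have heq : (fun τ => T τ x) = fun τ => a τ * ‖x‖ ^ 2 + C τ := funext fun τ => hT τ x
  rw [heq, hfd, hT t x]
  convert htd using 1
  ring
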